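/- arXiv:1811.11560 — 3 statements merged into one kernel-verified Lean document; each statement's English description precedes it below -/
import Mathlib

section
/- Let $q_0(z) = \frac{1}{4}(z^5 - z^4 + z^2 - z)$. Then $\sup_{z \in \overline{\mathbb{D}}} |q_0(z)| < 1$, where $\overline{\mathbb{D}} = \{z \in \mathbb{C} : |z| \le 1\}$ is the closed unit disc. -/
noncomputable def q0 (z : ℂ) : ℂ := (z ^ 5 - z ^ 4 + z ^ 2 - z) / 4

/-!
Write `q0 z = z (z - 1) (z³ + 1) / 4` and `x = Re z`. On the closed unit disc
`|z - 1|² ≤ 2 (1 - x)` and `|z³ + 1|² ≤ 2 (1 + Re z³)`, so it suffices to bound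
`(1 - x) (1 + Re z³)`. For `x ≥ 0` this is at most `2`; for `x ≤ 0` the inequality
`Im² z ≤ 1 - x²` gives `1 + Re z³ ≤ (1 + x) (2x - 1)²`, with equality on the unit circle
(`cos 3θ = 4 cos³ θ - 3 cos θ`), and the quartic `(1 - x²) (2x - 1)²` is at most `81/25`.
Hence `|q0| ≤ 9/10` on the disc.
-/

namespace Complex

lemma re_sq_add_im_sq_le_one {z : ℂ} (hz : ‖z‖ ≤ 1) : z.re ^ 2 + z.im ^ 2 ≤ 1 := by
  have h : ‖z‖ ^ 2 ≤ 1 := pow_le_one₀ (norm_nonneg z) hz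
  rw [Complex.sq_norm, normSq_apply] at h
  nlinarith

lemma norm_add_one_sq_le {w : ℂ} (hw : ‖w‖ ≤ 1) : ‖w + 1‖ ^ 2 ≤ 2 * (1 + w.re) := by
  have h := re_sq_add_im_sq_le_one hw
  rw [Complex.sq_norm, normSq_apply]
  simp only [add_re, add_im, one_re, one_im, add_zero]
  nlinarith

lemma re_cube (z : ℂ) : (z ^ 3).re = z.re ^ 3 - 3 * z.re * z.im ^ 2 := by
  simp only [pow_succ, pow_zero, one_mul, mul_re, mul_im]
  ring

lemma one_add_re_cube_le {z : ℂ} (hz : ‖z‖ ≤ 1) (hre : z.re ≤ 0) :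
    1 + (z ^ 3).re ≤ (1 + z.re) * (2 * z.re - 1) ^ 2 := by
  have h := re_sq_add_im_sq_le_one hz
  rw [re_cube]
  nlinarith [mul_le_mul_of_nonneg_left (show z.im ^ 2 ≤ 1 - z.re ^ 2 by linarith)
    (show 0 ≤ -3 * z.re by linarith)]

end Complex

-- `81/25 - (1 - x²)(2x - 1)² = 4 (x² - x/2 - 3/5)² + 4/5 (x + 1)²`
lemma one_sub_sq_mul_two_mul_sub_one_sq_le (x : ℝ) : (1 - x ^ 2) * (2 * x - 1) ^ 2 ≤ 81 / 25 := by
  nlinarith [sq_nonneg (x ^ 2 - x / 2 - 3 / 5), sq_nonneg (x + 1)]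

lemma one_sub_re_mul_one_add_re_cube_le {z : ℂ} (hz : ‖z‖ ≤ 1) :
    (1 - z.re) * (1 + (z ^ 3).re) ≤ 81 / 25 := by
  have hre : |z.re| ≤ 1 := (Complex.abs_re_le_norm z).trans hz
  have hre3 : |(z ^ 3).re| ≤ 1 :=
    (Complex.abs_re_le_norm _).trans (by rw [norm_pow]; exact pow_le_one₀ (norm_nonneg z) hz)
  rw [abs_le] at hre hre3
  rcases le_total z.re 0 with hneg | hpos
  · calc (1 - z.re) * (1 + (z ^ 3).re)
        ≤ (1 - z.re) * ((1 + z.re) * (2 * z.re - 1) ^ 2) :=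
          mul_le_mul_of_nonneg_left (Complex.one_add_re_cube_le hz hneg) (by linarith)
      _ = (1 - z.re ^ 2) * (2 * z.re - 1) ^ 2 := by ring
      _ ≤ 81 / 25 := one_sub_sq_mul_two_mul_sub_one_sq_le z.re
  · nlinarith

lemma q0_eq_mul (z : ℂ) : q0 z = z * (z - 1) * (z ^ 3 + 1) / 4 := by
  unfold q0; ring

lemma norm_q0_le {z : ℂ} (hz : ‖z‖ ≤ 1) : ‖q0 z‖ ≤ 9 / 10 := by
  have h₁ : ‖z - 1‖ ^ 2 ≤ 2 * (1 - z.re) := by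
    have h := Complex.norm_add_one_sq_le (w := -z) (by rwa [norm_neg])
    rwa [neg_add_eq_sub, norm_sub_rev, Complex.neg_re, ← sub_eq_add_neg] at h
  have h₃ : ‖z ^ 3 + 1‖ ^ 2 ≤ 2 * (1 + (z ^ 3).re) :=
    Complex.norm_add_one_sq_le (by rw [norm_pow]; exact pow_le_one₀ (norm_nonneg z) hz)
  have hprod : (‖z - 1‖ * ‖z ^ 3 + 1‖) ^ 2 ≤ (18 / 5) ^ 2 := by
    calc (‖z - 1‖ * ‖z ^ 3 + 1‖) ^ 2 = ‖z - 1‖ ^ 2 * ‖z ^ 3 + 1‖ ^ 2 := mul_pow _ _ _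
      _ ≤ (2 * (1 - z.re)) * (2 * (1 + (z ^ 3).re)) :=
          mul_le_mul h₁ h₃ (sq_nonneg _) ((sq_nonneg _).trans h₁)
      _ = 4 * ((1 - z.re) * (1 + (z ^ 3).re)) := by ring
      _ ≤ (18 / 5) ^ 2 := by nlinarith [one_sub_re_mul_one_add_re_cube_le hz]
  have hprod' : ‖z - 1‖ * ‖z ^ 3 + 1‖ ≤ 18 / 5 :=
    (pow_le_pow_iff_left₀ (by positivity) (by norm_num) two_ne_zero).mp hprod
  calc ‖q0 z‖ = ‖z‖ * (‖z - 1‖ * ‖z ^ 3 + 1‖) / 4 := by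
        rw [q0_eq_mul, norm_div, norm_mul, norm_mul, mul_assoc]; norm_num
    _ ≤ 1 * (18 / 5) / 4 := by gcongr
    _ = 9 / 10 := by norm_num

theorem stmt_0 :
    (⨆ z : Metric.closedBall (0 : ℂ) 1, ‖q0 z‖) < 1 := by
  have : Nonempty (Metric.closedBall (0 : ℂ) 1) := ⟨⟨0, by simp⟩⟩
  calc (⨆ z : Metric.closedBall (0 : ℂ) 1, ‖q0 z‖) ≤ 9 / 10 :=
        ciSup_le fun z ↦ norm_q0_le (mem_closedBall_zero_iff.mp z.2)
    _ < 1 := by norm_num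
end

section
/- Let $p$ be a complex polynomial with $|p|_1 = 1$, $\deg p = d$, and define $w_{l+1}(z) = w_l(z) \cdot w_0(z^{4\deg w_l + 1})$ with $w_0 = p$. Then for every $l$, $|w_l|_1 = 1$, $w_l(1) = p(1)^{l+1}$, and $\sup_{x \in [-1,1]} |w_l(x)| \le \left(\sup_{x \in [-1,1]} |p(x)|\right)^{l+1}$. -/
open Polynomial

/-- The sum of the absolute values of the coefficients of a polynomial. -/
noncomputable def l1 (f : Polynomial ℂ) : ℝ := ∑ k ∈ f.support, ‖f.coeff k‖

/-!
Write `m = 4 deg w_l + 1`. As `deg w_l < m`, every exponent of `w_l(z) p(z^m)` has a unique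
base-`m` decomposition `i + m j` with `i ≤ deg w_l`, so each coefficient of `w_{l+1}` is a single
product `a_i b_j` and `|·|_1` is multiplicative along the recursion. The other two claims follow
by induction from evaluating at `1`, resp. at real `x ∈ [-1, 1]`, where `x^m ∈ [-1, 1]` again.
-/

theorem coeff_mul_expand {R : Type*} [CommSemiring R] {f : R[X]} {n : ℕ} (hf : f.natDegree < n)
    (p : R[X]) (k : ℕ) : (f * expand R n p).coeff k = f.coeff (k % n) * p.coeff (k / n) := by
  induction p using Polynomial.induction_on' with
  | add p q hp hq => simp only [map_add, mul_add, coeff_add, hp, hq]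
  | monomial e a =>
    rw [expand_monomial, ← C_mul_X_pow_eq_monomial, ← mul_assoc, coeff_mul_X_pow', coeff_mul_C,
      coeff_monomial]
    by_cases he : e = k / n
    · subst he
      rw [if_pos (Nat.div_mul_le_self k n), if_pos rfl, ← Nat.mod_eq_sub_div_mul]
    · rw [if_neg he, mul_zero]
      split_ifs with hle
      · refine mul_eq_zero_of_left (coeff_eq_zero_of_natDegree_lt ?_) a
        have : e < k / n := lt_of_le_of_ne ((Nat.le_div_iff_mul_le (by omega)).2 hle) he
        have hk : e * n + n ≤ k := by
          rw [← add_one_mul]; exact (Nat.le_div_iff_mul_le (by omega)).1 this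
        omega
      · rfl

theorem l1_mul_expand {f : ℂ[X]} {n : ℕ} (hf : f.natDegree < n) (p : ℂ[X]) :
    l1 (f * expand ℂ n p) = l1 f * l1 p := by
  have hmod_div {i : ℕ} (hi : i ∈ f.support) (j : ℕ) :
      (i + n * j) % n = i ∧ (i + n * j) / n = j := by
    have : i < n := (le_natDegree_of_mem_supp i hi).trans_lt hf
    rw [Nat.add_mul_mod_self_left, Nat.mod_eq_of_lt this, Nat.add_mul_div_left _ _ (by omega),
      Nat.div_eq_of_lt this, zero_add]
    exact ⟨rfl, rfl⟩
  rw [l1, l1, l1, Finset.sum_mul_sum, ← Finset.sum_product']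
  refine Finset.sum_nbij' (fun k => (k % n, k / n)) (fun ij => ij.1 + n * ij.2) ?_ ?_ ?_ ?_ ?_
  · intro k hk
    rw [mem_support_iff, coeff_mul_expand hf] at hk
    exact Finset.mem_product.2 ⟨mem_support_iff.2 (left_ne_zero_of_mul hk),
      mem_support_iff.2 (right_ne_zero_of_mul hk)⟩
  · rintro ⟨i, j⟩ hij
    obtain ⟨hi, hj⟩ := Finset.mem_product.1 hij
    rw [mem_support_iff, coeff_mul_expand hf, (hmod_div hi j).1, (hmod_div hi j).2]
    exact mul_ne_zero (mem_support_iff.1 hi) (mem_support_iff.1 hj)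
  · intro k _
    exact Nat.mod_add_div k n
  · rintro ⟨i, j⟩ hij
    exact Prod.ext_iff.2 (hmod_div (Finset.mem_product.1 hij).1 j)
  · intro k _
    rw [coeff_mul_expand hf, norm_mul]

theorem pow_mem_Icc_neg_one_one {x : ℝ} (hx : x ∈ Set.Icc (-1) 1) (m : ℕ) :
    x ^ m ∈ Set.Icc (-1) 1 := by
  rw [Set.mem_Icc, ← abs_le, abs_pow] at *
  exact pow_le_one₀ (abs_nonneg x) hx

theorem IsCompact.le_iSup_of_continuousOn {α : Type*} [TopologicalSpace α] {s : Set α}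
    (hs : IsCompact s) {g : α → ℝ} (hg : ContinuousOn g s) {x : α} (hx : x ∈ s) :
    g x ≤ ⨆ y : s, g y := by
  have hbdd := hs.bddAbove_image hg
  rw [Set.image_eq_range] at hbdd
  exact le_ciSup hbdd ⟨x, hx⟩

theorem eval_one_of_mul_expand {R : Type*} [CommSemiring R] {p : R[X]} {w : ℕ → R[X]}
    {n : ℕ → ℕ} (h0 : w 0 = p) (hrec : ∀ l, w (l + 1) = w l * expand R (n l) p) (l : ℕ) :
    (w l).eval 1 = p.eval 1 ^ (l + 1) := by
  induction l with
  | zero => rw [h0, pow_one]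
  | succ l ih => rw [hrec, eval_mul, expand_eval, one_pow, ih, ← pow_succ]

section MulExpand

variable {p : ℂ[X]} {w : ℕ → ℂ[X]} {n : ℕ → ℕ}

theorem l1_of_mul_expand (h0 : w 0 = p) (hrec : ∀ l, w (l + 1) = w l * expand ℂ (n l) p)
    (hn : ∀ l, (w l).natDegree < n l) (l : ℕ) : l1 (w l) = l1 p ^ (l + 1) := by
  induction l with
  | zero => rw [h0, pow_one]
  | succ l ih => rw [hrec, l1_mul_expand (hn l), ih, ← pow_succ]

theorem norm_eval_le_of_mul_expand (h0 : w 0 = p)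
    (hrec : ∀ l, w (l + 1) = w l * expand ℂ (n l) p) {S : ℝ}
    (hS : ∀ x ∈ Set.Icc (-1 : ℝ) 1, ‖p.eval (x : ℂ)‖ ≤ S) (l : ℕ) :
    ∀ x ∈ Set.Icc (-1 : ℝ) 1, ‖(w l).eval (x : ℂ)‖ ≤ S ^ (l + 1) := by
  induction l with
  | zero => simpa [h0] using hS
  | succ l ih =>
    intro x hx
    have hpx : ‖p.eval ((x : ℂ) ^ n l)‖ ≤ S := by
      exact_mod_cast hS _ (pow_mem_Icc_neg_one_one hx (n l))
    rw [hrec, eval_mul, expand_eval, norm_mul, pow_succ]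
    exact mul_le_mul (ih x hx) hpx (norm_nonneg _) ((norm_nonneg _).trans (ih x hx))

end MulExpand

theorem stmt_11 (p : Polynomial ℂ) (hp : l1 p = 1)
    (w : ℕ → Polynomial ℂ) (h0 : w 0 = p)
    (hrec : ∀ l, w (l + 1) = w l * p.comp (X ^ (4 * (w l).natDegree + 1))) :
    ∀ l : ℕ, l1 (w l) = 1 ∧ (w l).eval 1 = (p.eval 1) ^ (l + 1) ∧
      (⨆ x : Set.Icc (-1 : ℝ) 1, ‖(w l).eval ((x : ℝ) : ℂ)‖) ≤
        (⨆ x : Set.Icc (-1 : ℝ) 1, ‖p.eval ((x : ℝ) : ℂ)‖) ^ (l + 1) := by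
  have hrec' : ∀ l, w (l + 1) = w l * expand ℂ (4 * (w l).natDegree + 1) p := hrec
  have hdeg (l : ℕ) : (w l).natDegree < 4 * (w l).natDegree + 1 := by omega
  have hsup {x : ℝ} (hx : x ∈ Set.Icc (-1 : ℝ) 1) :
      ‖p.eval (x : ℂ)‖ ≤ ⨆ y : Set.Icc (-1 : ℝ) 1, ‖p.eval ((y : ℝ) : ℂ)‖ :=
    isCompact_Icc.le_iSup_of_continuousOn (g := fun x : ℝ => ‖p.eval (x : ℂ)‖)
      (by fun_prop) hx
  have : Nonempty (Set.Icc (-1 : ℝ) 1) := ⟨⟨0, by norm_num⟩⟩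
  intro l
  refine ⟨by rw [l1_of_mul_expand h0 hrec' hdeg, hp, one_pow],
    eval_one_of_mul_expand h0 hrec' l, ?_⟩
  exact ciSup_le fun x => norm_eval_le_of_mul_expand h0 hrec' (fun y hy => hsup hy) l x x.2
end

section
/- Let $b > \frac{-5+4\sqrt{2}}{7}$, $b \le \alpha \le 1$, and let $q$ be a complex polynomial with $q(1) = q(-1) = q(0) = 0$ and $\sup_{x\in[-1,1]}|q(x)| \le \varepsilon$ where $\varepsilon < b - \frac{1}{8}\frac{(1-b)^2}{1+b}$. Define $p_\alpha(z) = \frac{1}{2}(\alpha+b)z^4 - \frac{1}{2}(\alpha-b)z^2 + (1-\alpha)q(z)$. Then $p_\alpha(1) = p_\alpha(-1) = b$ and $|p_\alpha(x_0)| < b$ for $x_0 = \sqrt{\frac{\alpha-b}{2(\alpha+b)}}$. -/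
/-!
With `t = (α - b) / (2(α + b))` the quartic part of `p_α` at `x₀ = √t` is the vertex value of
`s ↦ (α + b)/2 · s² - (α - b)/2 · s`, namely `-(α - b)² / (8(α + b))`. Since `x₀ ∈ [-1, 1]`, the
perturbation contributes at most `(1 - α) ε ≤ ε`, and `α ↦ (α - b)² / (α + b)` is increasing on
`[b, 1]`, so `|p_α(x₀)| ≤ (1 - b)² / (8(1 + b)) + ε < b`.
-/

open Polynomial

lemma biquadratic_eval_of_sq_eq_vertex {u v x : ℝ} (hu : u ≠ 0) (hx : x ^ 2 = v / (2 * u)) :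
    u / 2 * x ^ 4 - v / 2 * x ^ 2 = -(v ^ 2 / (8 * u)) := by
  rw [show x ^ 4 = (x ^ 2) ^ 2 by ring, hx]
  field_simp
  ring

lemma sq_sub_div_add_le_of_le {b α β : ℝ} (hb : 0 < b) (hbα : b ≤ α) (hαβ : α ≤ β) :
    (α - b) ^ 2 / (α + b) ≤ (β - b) ^ 2 / (β + b) := by
  rw [div_le_div_iff₀ (by linarith) (by linarith)]
  have hx : 0 ≤ α - b := sub_nonneg.2 hbα
  have hxy : 0 ≤ β - α := sub_nonneg.2 hαβ
  nlinarith [mul_nonneg (mul_nonneg hx (add_nonneg hx hxy)) hxy,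
    mul_nonneg (mul_nonneg hb.le hxy) (add_nonneg hx (add_nonneg hx hxy))]

lemma norm_ofReal_add_ofReal_mul_le (r : ℝ) {s : ℝ} (hs : 0 ≤ s) (w : ℂ) :
    ‖(r : ℂ) + s * w‖ ≤ |r| + s * ‖w‖ := by
  calc ‖(r : ℂ) + s * w‖ ≤ ‖(r : ℂ)‖ + ‖(s : ℂ) * w‖ := norm_add_le _ _
    _ = |r| + s * ‖w‖ := by rw [Complex.norm_real, norm_mul, Complex.norm_of_nonneg hs]; rfl

lemma sqrt_div_mem_Icc {v u : ℝ} (hv : 0 ≤ v) (hvu : v ≤ u) :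
    Real.sqrt (v / u) ∈ Set.Icc (-1 : ℝ) 1 :=
  ⟨by linarith [Real.sqrt_nonneg (v / u)], Real.sqrt_le_one.2 (div_le_one_of_le₀ hvu (hv.trans hvu))⟩

theorem stmt_16 (b α ε : ℝ) (hb0 : b > (-5 + 4 * Real.sqrt 2) / 7)
    (hbα : b ≤ α) (hα : α ≤ 1)
    (q : Polynomial ℂ) (hq1 : q.eval 1 = 0) (hqm1 : q.eval (-1) = 0) (hq0 : q.eval 0 = 0)
    (hqε : ∀ x ∈ Set.Icc (-1 : ℝ) 1, ‖q.eval ((x : ℝ) : ℂ)‖ ≤ ε)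
    (hε : ε < b - (1 / 8) * (1 - b) ^ 2 / (1 + b))
    (pα : ℂ → ℂ)
    (hpα : ∀ z, pα z = ((α : ℂ) + b) / 2 * z ^ 4 - ((α : ℂ) - b) / 2 * z ^ 2 +
      (1 - (α : ℂ)) * q.eval z)
    (x₀ : ℝ) (hx₀ : x₀ = Real.sqrt ((α - b) / (2 * (α + b)))) :
    pα 1 = (b : ℂ) ∧ pα (-1) = (b : ℂ) ∧ ‖pα ((x₀ : ℝ) : ℂ)‖ < b := by
  have hb : 0 < b := by
    nlinarith [Real.sq_sqrt (show (0 : ℝ) ≤ 2 by norm_num), Real.sqrt_nonneg 2]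
  have hε0 : 0 ≤ ε := by simpa [hq0] using hqε 0 (by norm_num)
  refine ⟨by rw [hpα, hq1]; ring, by rw [hpα, hqm1]; ring, ?_⟩
  have hx₀mem : x₀ ∈ Set.Icc (-1 : ℝ) 1 := hx₀ ▸ sqrt_div_mem_Icc (by linarith) (by linarith)
  have hx₀sq : x₀ ^ 2 = (α - b) / (2 * (α + b)) := by
    rw [hx₀, Real.sq_sqrt (div_nonneg (by linarith) (by linarith))]
  have hval := biquadratic_eval_of_sq_eq_vertex (by linarith) hx₀sq
  have hmono := sq_sub_div_add_le_of_le hb hbα hα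
  calc ‖pα x₀‖
      = ‖((-((α - b) ^ 2 / (8 * (α + b))) : ℝ) : ℂ) + ((1 - α : ℝ) : ℂ) * q.eval ↑x₀‖ := by
        rw [hpα, ← hval]; push_cast; ring_nf
    _ ≤ (α - b) ^ 2 / (8 * (α + b)) + (1 - α) * ε := by
        refine (norm_ofReal_add_ofReal_mul_le _ (by linarith) _).trans ?_
        rw [abs_neg, abs_of_nonneg (div_nonneg (sq_nonneg _) (by linarith))]
        exact add_le_add le_rfl (mul_le_mul_of_nonneg_left (hqε x₀ hx₀mem) (by linarith))
    _ = (α - b) ^ 2 / (α + b) / 8 + (1 - α) * ε := by rw [div_div, mul_comm 8]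
    _ ≤ (1 - b) ^ 2 / (1 + b) / 8 + ε := by gcongr ?_ / 8 + ?_; nlinarith
    _ = (1 / 8) * (1 - b) ^ 2 / (1 + b) + ε := by ring
    _ < b := by linarith
end
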